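/- arXiv:1507.06738 — 2 statements merged into one kernel-verified Lean document; each statement's English description precedes it below -/
import Mathlib

section
/- Let d, T be positive integers, let τ be an integer with 1 ≤ τ ≤ T, let B > 0, and let R ≥ 0 and R₀ ≥ 0 be reals. Let v₁, …, v_τ ∈ ℝᵈ and θ₁, …, θ_τ ∈ Ω := {θ ∈ ℝᵈ : θ ≥ 0, ‖θ‖₁ ≤ 1}. Define g_t(θ) := θ · (v_t − (B/T)𝟏). Suppose the online-learning regret bound sup_{θ ∈ Ω} Σ_{t=1}^{τ} g_t(θ) − Σ_{t=1}^{τ} g_t(θ_t) ≤ R holds, and suppose that either τ = T, or there exists a coordinate j ∈ [d] with Σ_{t=1}^{τ} (v_t)_j ≥ B − R₀. Then Σ_{t=1}^{τ} θ_t · (v_t − (B/T)𝟏) ≥ B − τB/T − R − R₀. -/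
/-!
Regret is measured against every comparator in `Ω`. Against `θ = 0` it gives
`Σ g_t(θ_t) ≥ -R`, which suffices when `τ = T`, since then `B - τB/T = 0` and `R₀ ≥ 0`.
Against the basis vector `e_j` of an exhausted resource it gives
`Σ g_t(θ_t) ≥ Σ (v_t)_j - τB/T - R`, and `Σ (v_t)_j ≥ B - R₀` finishes.
-/

open Matrix

section Regret

variable {ι n : Type*} [Fintype n]

def RegretLE (s : Finset ι) (w θ : ι → n → ℝ) (R : ℝ) : Prop :=
  ∀ θ' : n → ℝ, (∀ j, 0 ≤ θ' j) → ∑ j, θ' j ≤ 1 →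
    ∑ t ∈ s, θ' ⬝ᵥ w t - ∑ t ∈ s, θ t ⬝ᵥ w t ≤ R

namespace RegretLE

variable {s : Finset ι} {w θ : ι → n → ℝ} {R : ℝ}

theorem neg_le_sum (h : RegretLE s w θ R) : -R ≤ ∑ t ∈ s, θ t ⬝ᵥ w t := by
  have h0 := h 0 (fun _ => le_rfl) (by simp)
  simp only [zero_dotProduct, Finset.sum_const_zero, zero_sub] at h0
  linarith

theorem sum_apply_sub_le_sum [DecidableEq n] (h : RegretLE s w θ R) (j : n) :
    ∑ t ∈ s, w t j - R ≤ ∑ t ∈ s, θ t ⬝ᵥ w t := by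
  have hj := h (Pi.single j 1) (fun i => by by_cases hi : i = j <;> simp [hi]) (by simp)
  simp only [single_one_dotProduct] at hj
  linarith

end RegretLE

end Regret

theorem stmt_6_general (d T : ℕ) (hT : 0 < T)
    (τ : ℕ)
    (B R R₀ : ℝ) (hR₀ : 0 ≤ R₀)
    (v : ℕ → Fin d → ℝ) (θ : ℕ → Fin d → ℝ)
    (hreg : ∀ θ' : Fin d → ℝ, (∀ j, 0 ≤ θ' j) → ∑ j, θ' j ≤ 1 →
      (∑ t ∈ Finset.Icc 1 τ, θ' ⬝ᵥ (v t - fun _ => B / (T : ℝ)))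
        - (∑ t ∈ Finset.Icc 1 τ, θ t ⬝ᵥ (v t - fun _ => B / (T : ℝ))) ≤ R)
    (hstop : τ = T ∨ ∃ j : Fin d, B - R₀ ≤ ∑ t ∈ Finset.Icc 1 τ, v t j) :
    B - τ * B / T - R - R₀
      ≤ ∑ t ∈ Finset.Icc 1 τ, θ t ⬝ᵥ (v t - fun _ => B / (T : ℝ)) := by
  have hreg' : RegretLE (Finset.Icc 1 τ) (fun t => v t - fun _ => B / (T : ℝ)) θ R := hreg
  rcases hstop with rfl | ⟨j, hj⟩
  · have hτ : (τ : ℝ) ≠ 0 := by positivity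
    have hfull : B - τ * B / τ = 0 := by field_simp; ring
    have := hreg'.neg_le_sum
    linarith
  · have hsum : ∑ t ∈ Finset.Icc 1 τ, (v t j - B / T)
        = ∑ t ∈ Finset.Icc 1 τ, v t j - τ * B / T := by
      simp [Finset.sum_sub_distrib, mul_div_assoc]
    have := hreg'.sum_apply_sub_le_sum j
    simp only [Pi.sub_apply, hsum] at this
    linarith

/-- **Online-learning guarantee for the dual multipliers.** If the played multipliers
`θ_t ∈ Ω = {θ ≥ 0, ‖θ‖₁ ≤ 1}` satisfy the regret bound `R` against every fixed `θ ∈ Ω`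
for the linear functions `g_t(θ) = θ·(v_t − (B/T)𝟏)`, and either `τ = T` or some resource
`j` has `Σ_{t≤τ} (v_t)_j ≥ B − R₀`, then
`Σ_{t=1}^τ θ_t·(v_t − (B/T)𝟏) ≥ B − τB/T − R − R₀`. -/
theorem stmt_6 (d T : ℕ) (hd : 0 < d) (hT : 0 < T)
    (τ : ℕ) (hτ1 : 1 ≤ τ) (hτT : τ ≤ T)
    (B R R₀ : ℝ) (hB : 0 < B) (hR : 0 ≤ R) (hR₀ : 0 ≤ R₀)
    (v : ℕ → Fin d → ℝ) (θ : ℕ → Fin d → ℝ)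
    (hθ : ∀ t ∈ Finset.Icc 1 τ, (∀ j, 0 ≤ θ t j) ∧ ∑ j, θ t j ≤ 1)
    (hreg : ∀ θ' : Fin d → ℝ, (∀ j, 0 ≤ θ' j) → ∑ j, θ' j ≤ 1 →
      (∑ t ∈ Finset.Icc 1 τ, θ' ⬝ᵥ (v t - fun _ => B / (T : ℝ)))
        - (∑ t ∈ Finset.Icc 1 τ, θ t ⬝ᵥ (v t - fun _ => B / (T : ℝ))) ≤ R)
    (hstop : τ = T ∨ ∃ j : Fin d, B - R₀ ≤ ∑ t ∈ Finset.Icc 1 τ, v t j) :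
    B - τ * B / T - R - R₀
      ≤ ∑ t ∈ Finset.Icc 1 τ, θ t ⬝ᵥ (v t - fun _ => B / (T : ℝ)) :=
  stmt_6_general d T hT τ B R R₀ hR₀ v θ hreg hstop
end

section
/- Fix positive integers m, K, d, T and a real B ≥ 0. Let D be a Borel probability measure on Ω₀ := [0,1]^{m×K} × [0,1]^{K} × [0,1]^{d×K}, whose samples are triples (X, r, V) of a context matrix, a reward vector, and a consumption matrix, and let D^T be the T-fold product measure (i.i.d. samples (X_t, r_t, V_t), t = 1, …, T). Let an adaptive policy be given by measurable maps p_t : Ω₀^{t−1} × [0,1]^{m×K} → Q for t = 1, …, T, where Q := {q ∈ ℝᴷ : q ≥ 0, Σ_a q_a ≤ 1}, so that the (sub-)distribution p_t over arms played at time t depends only on the history of the first t−1 samples and the current context X_t. Suppose the adaptive policy is feasible in expectation: E_{D^T}[ Σ_{t=1}^{T} V_t p_t ] ≤ B·𝟏 componentwise. Then there exists a measurable static context-dependent policy π : [0,1]^{m×K} → Q such that T · E_{(X,r,V)∼D}[ rᵀ π(X) ] ≥ E_{D^T}[ Σ_{t=1}^{T} r_tᵀ p_t ] and T · E_{(X,r,V)∼D}[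 V π(X) ] ≤ B·𝟏 componentwise. -/
open MeasureTheory

/-- A single sample: a context matrix `X ∈ ℝ^{m×K}` (given column-wise as a function),
a reward vector `r ∈ ℝ^K`, and a consumption matrix `V ∈ ℝ^{d×K}`. -/
abbrev LinCBwKSample (m K d : ℕ) : Type :=
  (Fin m → Fin K → ℝ) × (Fin K → ℝ) × (Fin d → Fin K → ℝ)

/-- Replacing the `t`-th coordinate of an i.i.d. sample by a fresh independent sample
preserves the product measure. -/
lemma aux_map_update {ι : Type*} [Fintype ι] [DecidableEq ι] {α : Type*} [MeasurableSpace α]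
    (D : Measure α) [IsProbabilityMeasure D] (t : ι) :
    Measure.map (fun z : (ι → α) × α => Function.update z.1 t z.2)
      ((Measure.pi fun _ : ι => D).prod D) = Measure.pi fun _ : ι => D := by
  refine (Measure.pi_eq fun s hs => ?_).symm
  rw [Measure.map_apply measurable_update' (MeasurableSet.univ_pi hs)]
  have hpre : (fun z : (ι → α) × α => Function.update z.1 t z.2) ⁻¹' Set.pi Set.univ s
      = (Set.pi Set.univ (Function.update s t Set.univ)) ×ˢ (s t) := by
    ext ⟨ω, y⟩
    simp only [Set.mem_preimage, Set.mem_pi, Set.mem_univ, true_implies, Set.mem_prod,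
      Function.update_apply]
    constructor
    · intro h
      refine ⟨fun i => ?_, by simpa using h t⟩
      by_cases hi : i = t
      · subst hi; simp
      · simpa [hi] using h i
    · rintro ⟨h1, h2⟩ i
      by_cases hi : i = t
      · subst hi; simpa
      · simpa [hi] using h1 i
  rw [hpre, Measure.prod_prod, Measure.pi_pi]
  have hval : ∀ i, D (Function.update s t Set.univ i)
      = Function.update (fun i => D (s i)) t 1 i := by
    intro i
    by_cases hi : i = t
    · subst hi; simp
    · simp [Function.update_apply, hi]
  rw [Finset.prod_congr rfl fun i _ => hval i,
    Finset.prod_update_of_mem (Finset.mem_univ t), one_mul, mul_comm,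
    Finset.sdiff_singleton_eq_erase,
    ← Finset.mul_prod_erase Finset.univ _ (Finset.mem_univ t)]

/-- The "one-round static" policy obtained by averaging the adaptive policy `p t` over an
independent history, with the context of round `t` forced to be `X`. -/
noncomputable def auxg {m K d T : ℕ} (D : Measure (LinCBwKSample m K d))
    (p : Fin T → (Fin T → LinCBwKSample m K d) → Fin K → ℝ) (t : Fin T)
    (X : Fin m → Fin K → ℝ) (a : Fin K) : ℝ :=
  ∫ ω, p t (Function.update ω t (X, 0, 0)) a ∂(Measure.pi fun _ : Fin T => D)

/-- **The optimal static policy upper bounds any adaptive policy.** Let `D` be a probability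
distribution over samples `(X, r, V)` with entries in `[0,1]`, and let `(p_t)_{t<T}` be an
adaptive policy: each `p_t` is a measurable map from the sequence of samples to a
sub-distribution over the `K` arms which depends only on the first `t−1` samples and on the
context `X_t` of the current sample.  If the adaptive policy is feasible in expectation,
i.e. `E[Σ_t V_t p_t] ≤ B·𝟏`, then there is a measurable static context-dependent policy
`π` with `T·E[rᵀπ(X)] ≥ E[Σ_t r_tᵀ p_t]` and `T·E[V π(X)] ≤ B·𝟏`. -/
theorem stmt_9 (m K d T : ℕ) (hm : 0 < m) (hK : 0 < K) (hd : 0 < d) (hT : 0 < T)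
    (B : ℝ) (hB : 0 ≤ B)
    (D : Measure (LinCBwKSample m K d)) [IsProbabilityMeasure D]
    (hsupp : ∀ᵐ ω ∂D, (∀ i a, ω.1 i a ∈ Set.Icc (0 : ℝ) 1) ∧
      (∀ a, ω.2.1 a ∈ Set.Icc (0 : ℝ) 1) ∧ (∀ j a, ω.2.2 j a ∈ Set.Icc (0 : ℝ) 1))
    (p : Fin T → (Fin T → LinCBwKSample m K d) → Fin K → ℝ)
    (hpmeas : ∀ t, Measurable (p t))
    (hpQ : ∀ t ω, (∀ a, 0 ≤ p t ω a) ∧ ∑ a, p t ω a ≤ 1)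
    (hpadapt : ∀ t (ω ω' : Fin T → LinCBwKSample m K d),
      (∀ s, s < t → ω s = ω' s) → (ω t).1 = (ω' t).1 → p t ω = p t ω')
    (hfeas : ∀ j : Fin d,
      (∫ ω, ∑ t, ∑ a, (ω t).2.2 j a * p t ω a
          ∂(Measure.pi fun _ : Fin T => D)) ≤ B) :
    ∃ π : (Fin m → Fin K → ℝ) → Fin K → ℝ,
      Measurable π ∧ (∀ X, (∀ a, 0 ≤ π X a) ∧ ∑ a, π X a ≤ 1) ∧
      (∫ ω, ∑ t, ∑ a, (ω t).2.1 a * p t ω a ∂(Measure.pi fun _ : Fin T => D))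
        ≤ (T : ℝ) * ∫ ω, ∑ a, ω.2.1 a * π ω.1 a ∂D ∧
      ∀ j : Fin d, (T : ℝ) * (∫ ω, ∑ a, ω.2.2 j a * π ω.1 a ∂D) ≤ B := by
  classical
  haveI hPprob : IsProbabilityMeasure (Measure.pi fun _ : Fin T => D) := by infer_instance
  have hFjoint : ∀ (t : Fin T) (a : Fin K),
      Measurable fun z : (Fin m → Fin K → ℝ) × (Fin T → LinCBwKSample m K d) =>
        p t (Function.update z.2 t (z.1, 0, 0)) a := by
    intro t a
    have h1 : Measurable fun z : (Fin m → Fin K → ℝ) × (Fin T → LinCBwKSample m K d) =>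
        Function.update z.2 t (z.1, (0 : Fin K → ℝ), (0 : Fin d → Fin K → ℝ)) :=
      measurable_update'.comp (measurable_snd.prodMk (measurable_fst.prodMk measurable_const))
    exact ((hpmeas t).comp h1).eval
  have hFmeas : ∀ (t : Fin T) X (a : Fin K),
      Measurable fun ω : Fin T → LinCBwKSample m K d =>
        p t (Function.update ω t (X, 0, 0)) a := by
    intro t X a
    exact (hFjoint t a).comp (measurable_const.prodMk measurable_id)
  have hp01 : ∀ (t : Fin T) ω (a : Fin K), 0 ≤ p t ω a ∧ p t ω a ≤ 1 := by
    intro t ω a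
    refine ⟨(hpQ t ω).1 a, le_trans ?_ (hpQ t ω).2⟩
    exact Finset.single_le_sum (fun b _ => (hpQ t ω).1 b) (Finset.mem_univ a)
  have hFint : ∀ (t : Fin T) X (a : Fin K),
      Integrable (fun ω => p t (Function.update ω t (X, 0, 0)) a)
        (Measure.pi fun _ : Fin T => D) := by
    intro t X a
    refine Integrable.mono' (integrable_const 1) (hFmeas t X a).aestronglyMeasurable
      (ae_of_all _ fun ω => ?_)
    rw [Real.norm_eq_abs, abs_of_nonneg (hp01 t _ a).1]
    exact (hp01 t _ a).2
  have hg0 : ∀ (t : Fin T) X (a : Fin K), 0 ≤ auxg D p t X a := fun t X a =>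
    integral_nonneg fun ω => (hp01 t _ a).1
  have hgsum : ∀ (t : Fin T) X, ∑ a, auxg D p t X a ≤ 1 := by
    intro t X
    have h1 : ∑ a, auxg D p t X a
        = ∫ ω, ∑ a, p t (Function.update ω t (X, 0, 0)) a ∂(Measure.pi fun _ : Fin T => D) :=
      (integral_finset_sum _ fun a _ => hFint t X a).symm
    rw [h1]
    calc (∫ ω, ∑ a, p t (Function.update ω t (X, 0, 0)) a ∂(Measure.pi fun _ : Fin T => D))
        ≤ ∫ _ω, (1 : ℝ) ∂(Measure.pi fun _ : Fin T => D) :=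
          integral_mono (integrable_finset_sum _ fun a _ => hFint t X a)
            (integrable_const 1) fun ω => (hpQ t _).2
      _ = 1 := by simp
  have hg1 : ∀ (t : Fin T) X (a : Fin K), auxg D p t X a ≤ 1 := fun t X a =>
    le_trans (Finset.single_le_sum (fun b _ => hg0 t X b) (Finset.mem_univ a)) (hgsum t X)
  have hgmeas : ∀ (t : Fin T) (a : Fin K), Measurable fun X => auxg D p t X a := by
    intro t a
    exact ((hFjoint t a).stronglyMeasurable.integral_prod_right'
      (ν := Measure.pi fun _ : Fin T => D)).measurable
  have hmap : ∀ t : Fin T, Measure.map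
      (fun z : (Fin T → LinCBwKSample m K d) × LinCBwKSample m K d =>
        Function.update z.1 t z.2)
      ((Measure.pi fun _ : Fin T => D).prod D) = Measure.pi fun _ : Fin T => D :=
    fun t => aux_map_update D t
  -- the key per-round identity
  have key : ∀ (t : Fin T) (c : LinCBwKSample m K d → Fin K → ℝ), Measurable c →
      (∀ᵐ y ∂D, ∀ a, |c y a| ≤ 1) →
      Integrable (fun ω => ∑ a, c (ω t) a * p t ω a) (Measure.pi fun _ : Fin T => D) ∧
      Integrable (fun y => ∑ a, c y a * auxg D p t y.1 a) D ∧
      (∫ ω, ∑ a, c (ω t) a * p t ω a ∂(Measure.pi fun _ : Fin T => D))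
        = ∫ y, ∑ a, c y a * auxg D p t y.1 a ∂D := by
    intro t c hcmeas hcbd
    have hrepr : ∀ ω, p t ω = p t (Function.update ω t ((ω t).1, 0, 0)) := by
      intro ω
      refine hpadapt t ω (Function.update ω t ((ω t).1, 0, 0)) (fun s hs => ?_) ?_
      · exact (Function.update_of_ne (ne_of_lt hs) _ _).symm
      · simp
    have hGeq : (fun ω : Fin T → LinCBwKSample m K d => ∑ a, c (ω t) a * p t ω a)
        = fun ω => ∑ a, c (ω t) a * p t (Function.update ω t ((ω t).1, 0, 0)) a := by
      funext ω
      exact Finset.sum_congr rfl fun a _ => by rw [← hrepr]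
    have hHmeas : Measurable fun z : (Fin T → LinCBwKSample m K d) × LinCBwKSample m K d =>
        ∑ a, c z.2 a * p t (Function.update z.1 t (z.2.1, 0, 0)) a := by
      apply Finset.measurable_sum
      intro a _
      exact ((hcmeas.comp measurable_snd).eval).mul
        ((hFjoint t a).comp ((measurable_fst.comp measurable_snd).prodMk measurable_fst))
    have haebd : ∀ᵐ z ∂((Measure.pi fun _ : Fin T => D).prod D), ∀ a, |c z.2 a| ≤ 1 := by
      rw [ae_iff] at hcbd ⊢
      have hset : {z : (Fin T → LinCBwKSample m K d) × LinCBwKSample m K d |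
          ¬ ∀ a, |c z.2 a| ≤ 1}
          = Set.univ ×ˢ {y : LinCBwKSample m K d | ¬ ∀ a, |c y a| ≤ 1} := by
        ext z; simp [Set.mem_prod]
      rw [hset, Measure.prod_prod, hcbd, mul_zero]
    have hHint : Integrable
        (fun z : (Fin T → LinCBwKSample m K d) × LinCBwKSample m K d =>
          ∑ a, c z.2 a * p t (Function.update z.1 t (z.2.1, 0, 0)) a)
        ((Measure.pi fun _ : Fin T => D).prod D) := by
      refine Integrable.mono' (integrable_const (K : ℝ)) hHmeas.aestronglyMeasurable ?_
      filter_upwards [haebd] with z hz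
      rw [Real.norm_eq_abs]
      calc |∑ a, c z.2 a * p t (Function.update z.1 t (z.2.1, 0, 0)) a|
          ≤ ∑ a, |c z.2 a * p t (Function.update z.1 t (z.2.1, 0, 0)) a| :=
            Finset.abs_sum_le_sum_abs _ _
        _ ≤ ∑ _a : Fin K, 1 := by
            refine Finset.sum_le_sum fun a _ => ?_
            rw [abs_mul]
            refine mul_le_one₀ (hz a) (abs_nonneg _) ?_
            rw [abs_of_nonneg (hp01 t _ a).1]; exact (hp01 t _ a).2
        _ = K := by simp
    have hGmeas : Measurable fun ω : Fin T → LinCBwKSample m K d =>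
        ∑ a, c (ω t) a * p t (Function.update ω t ((ω t).1, 0, 0)) a := by
      apply Finset.measurable_sum
      intro a _
      refine ((hcmeas.comp (measurable_pi_apply t)).eval).mul ?_
      exact (hFjoint t a).comp
        (((measurable_pi_apply t).fst).prodMk measurable_id)
    have hcompfun : ∀ z : (Fin T → LinCBwKSample m K d) × LinCBwKSample m K d,
        (∑ a, c ((Function.update z.1 t z.2) t) a *
          p t (Function.update (Function.update z.1 t z.2) t
            (((Function.update z.1 t z.2) t).1, 0, 0)) a)
        = ∑ a, c z.2 a * p t (Function.update z.1 t (z.2.1, 0, 0)) a := by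
      intro z
      refine Finset.sum_congr rfl fun a _ => ?_
      rw [Function.update_self, Function.update_idem]
    have hPint : Integrable (fun ω => ∑ a, c (ω t) a * p t ω a)
        (Measure.pi fun _ : Fin T => D) := by
      rw [hGeq, ← hmap t]
      rw [integrable_map_measure hGmeas.aestronglyMeasurable measurable_update'.aemeasurable]
      refine hHint.congr (ae_of_all _ fun z => ?_)
      exact (hcompfun z).symm
    have hPeq : (∫ ω, ∑ a, c (ω t) a * p t ω a ∂(Measure.pi fun _ : Fin T => D))
        = ∫ z, ∑ a, c z.2 a * p t (Function.update z.1 t (z.2.1, 0, 0)) a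
            ∂((Measure.pi fun _ : Fin T => D).prod D) := by
      rw [hGeq]
      have h1 := integral_map (μ := (Measure.pi fun _ : Fin T => D).prod D)
        (φ := fun z : (Fin T → LinCBwKSample m K d) × LinCBwKSample m K d =>
          Function.update z.1 t z.2)
        measurable_update'.aemeasurable hGmeas.aestronglyMeasurable
      rw [hmap t] at h1
      rw [h1]
      exact integral_congr_ae (ae_of_all _ fun z => hcompfun z)
    have hinner : ∀ y : LinCBwKSample m K d,
        (∫ ω, ∑ a, c y a * p t (Function.update ω t (y.1, 0, 0)) a
          ∂(Measure.pi fun _ : Fin T => D)) = ∑ a, c y a * auxg D p t y.1 a := by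
      intro y
      rw [integral_finset_sum _ fun a _ => (hFint t y.1 a).const_mul (c y a)]
      exact Finset.sum_congr rfl fun a _ => integral_const_mul _ _
    have hDint : Integrable (fun y => ∑ a, c y a * auxg D p t y.1 a) D := by
      refine Integrable.mono' (integrable_const (K : ℝ)) ?_ ?_
      · refine (Finset.measurable_sum _ fun a _ => ?_).aestronglyMeasurable
        exact (hcmeas.eval).mul ((hgmeas t a).comp measurable_fst)
      · filter_upwards [hcbd] with y hy
        rw [Real.norm_eq_abs]
        calc |∑ a, c y a * auxg D p t y.1 a| ≤ ∑ a, |c y a * auxg D p t y.1 a| :=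
              Finset.abs_sum_le_sum_abs _ _
          _ ≤ ∑ _a : Fin K, 1 := by
              refine Finset.sum_le_sum fun a _ => ?_
              rw [abs_mul]
              refine mul_le_one₀ (hy a) (abs_nonneg _) ?_
              rw [abs_of_nonneg (hg0 t _ a)]; exact hg1 t _ a
          _ = K := by simp
    refine ⟨hPint, hDint, ?_⟩
    rw [hPeq, integral_prod_symm _ hHint]
    exact integral_congr_ae (ae_of_all _ fun y => hinner y)
  -- instantiate for reward and consumption
  have hcr : Measurable fun y : LinCBwKSample m K d => y.2.1 :=
    measurable_fst.comp measurable_snd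
  have hcrbd : ∀ᵐ y ∂D, ∀ a, |(y : LinCBwKSample m K d).2.1 a| ≤ 1 := by
    filter_upwards [hsupp] with y hy a
    have h := hy.2.1 a
    rw [abs_le]; exact ⟨by linarith [h.1], h.2⟩
  have keyr := fun t => key t (fun y => y.2.1) hcr hcrbd
  have hcv : ∀ j : Fin d, Measurable fun y : LinCBwKSample m K d => y.2.2 j :=
    fun j => (measurable_snd.comp measurable_snd).eval
  have hcvbd : ∀ j : Fin d, ∀ᵐ y ∂D, ∀ a, |(y : LinCBwKSample m K d).2.2 j a| ≤ 1 := by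
    intro j
    filter_upwards [hsupp] with y hy a
    have h := hy.2.2 j a
    rw [abs_le]; exact ⟨by linarith [h.1], h.2⟩
  have keyv := fun (j : Fin d) (t : Fin T) => key t (fun y => y.2.2 j) (hcv j) (hcvbd j)
  have hT0 : (0 : ℝ) < T := by exact_mod_cast hT
  -- the static policy
  refine ⟨fun X a => (T : ℝ)⁻¹ * ∑ t, auxg D p t X a, ?_, ?_, ?_, ?_⟩
  · exact measurable_pi_lambda _ fun a =>
      (Finset.measurable_sum _ fun t _ => hgmeas t a).const_mul _
  · intro X
    constructor
    · intro a
      exact mul_nonneg (inv_nonneg.2 hT0.le) (Finset.sum_nonneg fun t _ => hg0 t X a)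
    · rw [← Finset.mul_sum, Finset.sum_comm]
      have h1 : ∑ t : Fin T, ∑ a, auxg D p t X a ≤ (T : ℝ) := by
        calc ∑ t : Fin T, ∑ a, auxg D p t X a ≤ ∑ _t : Fin T, (1 : ℝ) :=
              Finset.sum_le_sum fun t _ => hgsum t X
          _ = T := by simp
      calc (T : ℝ)⁻¹ * ∑ t : Fin T, ∑ a, auxg D p t X a ≤ (T : ℝ)⁻¹ * T :=
            mul_le_mul_of_nonneg_left h1 (inv_nonneg.2 hT0.le)
        _ = 1 := inv_mul_cancel₀ hT0.ne'
  · -- reward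
    have hLHS : (∫ ω, ∑ t, ∑ a, (ω t).2.1 a * p t ω a ∂(Measure.pi fun _ : Fin T => D))
        = ∑ t, ∫ y, ∑ a, y.2.1 a * auxg D p t y.1 a ∂D := by
      rw [integral_finset_sum _ fun t _ => (keyr t).1]
      exact Finset.sum_congr rfl fun t _ => (keyr t).2.2
    have hpt : ∀ y : LinCBwKSample m K d,
        ∑ a, y.2.1 a * ((T : ℝ)⁻¹ * ∑ t, auxg D p t y.1 a)
        = (T : ℝ)⁻¹ * ∑ t, ∑ a, y.2.1 a * auxg D p t y.1 a := by
      intro y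
      calc ∑ a, y.2.1 a * ((T : ℝ)⁻¹ * ∑ t, auxg D p t y.1 a)
          = ∑ a, ∑ t, (T : ℝ)⁻¹ * (y.2.1 a * auxg D p t y.1 a) := by
            refine Finset.sum_congr rfl fun a _ => ?_
            rw [Finset.mul_sum, Finset.mul_sum]
            exact Finset.sum_congr rfl fun t _ => by ring
        _ = (T : ℝ)⁻¹ * ∑ t, ∑ a, y.2.1 a * auxg D p t y.1 a := by
            rw [Finset.sum_comm, Finset.mul_sum]
            exact Finset.sum_congr rfl fun t _ => by rw [Finset.mul_sum]
    have hRHS : (∫ y : LinCBwKSample m K d,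
          ∑ a, y.2.1 a * ((T : ℝ)⁻¹ * ∑ t, auxg D p t y.1 a) ∂D)
        = (T : ℝ)⁻¹ * ∑ t, ∫ y, ∑ a, y.2.1 a * auxg D p t y.1 a ∂D := by
      simp only [hpt]
      rw [integral_const_mul, integral_finset_sum _ fun t _ => (keyr t).2.1]
    rw [hLHS, hRHS, ← mul_assoc, mul_inv_cancel₀ hT0.ne', one_mul]
  · -- consumption
    intro j
    have hLHS : (∫ ω, ∑ t, ∑ a, (ω t).2.2 j a * p t ω a ∂(Measure.pi fun _ : Fin T => D))
        = ∑ t, ∫ y, ∑ a, y.2.2 j a * auxg D p t y.1 a ∂D := by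
      rw [integral_finset_sum _ fun t _ => (keyv j t).1]
      exact Finset.sum_congr rfl fun t _ => (keyv j t).2.2
    have hpt : ∀ y : LinCBwKSample m K d,
        ∑ a, y.2.2 j a * ((T : ℝ)⁻¹ * ∑ t, auxg D p t y.1 a)
        = (T : ℝ)⁻¹ * ∑ t, ∑ a, y.2.2 j a * auxg D p t y.1 a := by
      intro y
      calc ∑ a, y.2.2 j a * ((T : ℝ)⁻¹ * ∑ t, auxg D p t y.1 a)
          = ∑ a, ∑ t, (T : ℝ)⁻¹ * (y.2.2 j a * auxg D p t y.1 a) := by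
            refine Finset.sum_congr rfl fun a _ => ?_
            rw [Finset.mul_sum, Finset.mul_sum]
            exact Finset.sum_congr rfl fun t _ => by ring
        _ = (T : ℝ)⁻¹ * ∑ t, ∑ a, y.2.2 j a * auxg D p t y.1 a := by
            rw [Finset.sum_comm, Finset.mul_sum]
            exact Finset.sum_congr rfl fun t _ => by rw [Finset.mul_sum]
    have hRHS : (∫ y : LinCBwKSample m K d,
          ∑ a, y.2.2 j a * ((T : ℝ)⁻¹ * ∑ t, auxg D p t y.1 a) ∂D)
        = (T : ℝ)⁻¹ * ∑ t, ∫ y, ∑ a, y.2.2 j a * auxg D p t y.1 a ∂D := by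
      simp only [hpt]
      rw [integral_const_mul, integral_finset_sum _ fun t _ => (keyv j t).2.1]
    rw [hRHS, ← mul_assoc, mul_inv_cancel₀ hT0.ne', one_mul, ← hLHS]
    exact hfeas j
end
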